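/- arXiv:math/0609277 — 2 statements merged into one kernel-verified Lean document; each statement's English description precedes it below -/
import Mathlib

section
/- Let n ≥ 1 and let x_1, …, x_n ∈ (0,∞) with empirical distribution function 𝔽(r) := (1/n)·#{i : x_i ≤ r}. Let 𝒦 denote the set of all functions h : [0,∞) → ℝ that are convex on [0,∞) and Lebesgue integrable over [0,∞). Suppose f̂ ∈ 𝒦 satisfies f̂(x_i) > 0 for all i and maximizes Ψ(h) := (1/n)·∑_{i=1}^n log h(x_i) − ∫_0^∞ h(x) dx over all h ∈ 𝒦 with h(x_i) > 0 for all i, and that there are points 0 = t_0 < t_1 < … < t_m with t_m > max_i x_i such that f̂ is affine on each interval [t_{k−1}, t_k], f̂ = 0 on [t_m, ∞), and at each t_k (1 ≤ k ≤ m) the right derivative of f̂ is strictly larger than the left derivative. Let F̂(r) := ∫_0^r f̂(x) dx. Then for every k ∈ {0, 1, …, m−1} and every r ∈ (t_k, t_{k+1}], ∫_{t_k}^r 𝔽(x) dx ≤ ∫_{t_k}^r F̂(x) dx. -/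
/-!
Perturb `f̂` to `f̂ * (1 + ε * g)` with `g v = (r - max t_k v)₊ = ∫_{t_k}^r 1{v ≤ u} du`.
For small `ε > 0` this is still convex: on `[t_k, r]` it is an affine function of slope `≤ 0`
(`f̂` vanishes eventually) times a decreasing affine one, hence a convex quadratic; at `r` the
left slope only drops by `ε f̂(r) ≥ 0`; and at `t_k` the strict kink of `f̂` absorbs the change of
slopes. Optimality of `f̂` then gives, to first order in `ε`, `(1/n) ∑ g(x_i) ≤ ∫ f̂ g`, and by
Fubini the two sides are `∫_{t_k}^r 𝔽` and `∫_{t_k}^r F̂`. Since `g` is constant on `[0, t_k]`,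
the perturbation also rescales `f̂` there, so `𝔽(t_k) = F̂(t_k)` is never needed.
-/

open MeasureTheory Set Filter Topology

section Convexity

variable {𝕜 : Type*} [Field 𝕜] [LinearOrder 𝕜] [IsStrictOrderedRing 𝕜]

theorem convexOn_univ_quadratic {c : 𝕜} (hc : 0 ≤ c) (d e : 𝕜) :
    ConvexOn 𝕜 univ (fun y : 𝕜 => c * y ^ 2 + d * y + e) := by
  refine ⟨convex_univ, fun x _ y _ a b ha hb hab => ?_⟩
  obtain rfl : b = 1 - a := by linear_combination hab
  have : a * (c * x ^ 2 + d * x + e) + (1 - a) * (c * y ^ 2 + d * y + e)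
      - (c * (a * x + (1 - a) * y) ^ 2 + d * (a * x + (1 - a) * y) + e)
      = c * a * (1 - a) * (x - y) ^ 2 := by ring
  simp only [smul_eq_mul]
  nlinarith [mul_nonneg (mul_nonneg (mul_nonneg hc ha) hb) (sq_nonneg (x - y))]

theorem ConvexOn.antitoneOn_of_eqOn_Ici {f : 𝕜 → 𝕜} {a T c : 𝕜} (hf : ConvexOn 𝕜 (Ici a) f)
    (hT : ∀ y, T ≤ y → f y = c) : AntitoneOn f (Ici a) := by
  intro x hx y hy hxy
  rcases hxy.eq_or_lt with rfl | hxy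
  · rfl
  set z := max y T + 1
  have hyz : y < z := by linarith [le_max_left y T]
  have hTz : T ≤ z := by linarith [le_max_right y T]
  have hza : z ∈ Ici a := le_trans hy hyz.le
  have h₁ := hf.slope_mono_adjacent hx hza hxy hyz
  have h₂ := hf.slope_mono_adjacent hy (le_trans hza (by linarith) : a ≤ z + 1) hyz
    (lt_add_one z)
  rw [hT z hTz, hT (z + 1) (by linarith), sub_self, zero_div] at h₂
  rw [hT z hTz] at h₁
  have := (div_le_iff₀ (sub_pos.2 hxy)).1 (h₁.trans h₂)
  linarith

theorem ConvexOn.union_of_slope_le {s t : Set 𝕜} {f : 𝕜 → 𝕜} {b L : 𝕜}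
    (hs : ConvexOn 𝕜 s f) (ht : ConvexOn 𝕜 t f) (hbs : IsGreatest s b) (hbt : IsLeast t b)
    (hleft : ∀ x ∈ s, f b - f x ≤ L * (b - x)) (hright : ∀ z ∈ t, L * (z - b) ≤ f z - f b) :
    ConvexOn 𝕜 (s ∪ t) f := by
  have hmem_s : ∀ u ∈ s ∪ t, u ≤ b → u ∈ s := fun u hu hub =>
    hu.elim id fun hut => (le_antisymm hub (hbt.2 hut)) ▸ hbs.1
  have hmem_t : ∀ u ∈ s ∪ t, b ≤ u → u ∈ t := fun u hu hbu =>
    hu.elim (fun hus => (le_antisymm (hbs.2 hus) hbu) ▸ hbt.1) id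
  have hconvex : Convex 𝕜 (s ∪ t) := by
    refine convex_iff_ordConnected.mpr ⟨fun u hu v hv w hw => ?_⟩
    rcases le_total w b with hwb | hbw
    · exact Or.inl (hs.1.ordConnected.out (hmem_s u hu (hw.1.trans hwb)) hbs.1 ⟨hw.1, hwb⟩)
    · exact Or.inr (ht.1.ordConnected.out hbt.1 (hmem_t v hv (hbw.trans hw.2)) ⟨hbw, hw.2⟩)
  refine convexOn_of_slope_mono_adjacent hconvex fun {x y z} hx hz hxy hyz => ?_
  rcases le_total z b with hzb | hbz
  · exact hs.slope_mono_adjacent (hmem_s x hx (by linarith)) (hmem_s z hz hzb) hxy hyz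
  rcases le_total b x with hbx | hxb
  · exact ht.slope_mono_adjacent (hmem_t x hx hbx) (hmem_t z hz (by linarith)) hxy hyz
  have hxs := hmem_s x hx hxb
  have hzt := hmem_t z hz hbz
  -- Compare the slope on the side of `b` containing `y` with `L`, which bounds the other side.
  rcases le_total y b with hyb | hby
  · set A := (f y - f x) / (y - x)
    have hA : A * (y - x) = f y - f x := div_mul_cancel₀ _ (by linarith)
    rw [le_div_iff₀ (by linarith)]
    rcases hyb.eq_or_lt with rfl | hyb
    · nlinarith [hleft x hxs, hright z hzt]
    have hys := hs.1.ordConnected.out hxs hbs.1 ⟨hxy.le, hyb.le⟩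
    have hAyb : A * (b - y) ≤ f b - f y :=
      (le_div_iff₀ (by linarith)).mp (hs.slope_mono_adjacent hxs hbs.1 hxy hyb)
    have hAL : A ≤ L := le_of_mul_le_mul_right ((hAyb.trans (hleft y hys))) (by linarith)
    nlinarith [hright z hzt, mul_le_mul_of_nonneg_right hAL (by linarith : 0 ≤ z - b)]
  · set B := (f z - f y) / (z - y)
    have hB : B * (z - y) = f z - f y := div_mul_cancel₀ _ (by linarith)
    rw [div_le_iff₀ (by linarith)]
    rcases hby.eq_or_lt with rfl | hby
    · nlinarith [hleft x hxs, hright z hzt]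
    have hyt := ht.1.ordConnected.out hbt.1 hzt ⟨hby.le, hyz.le⟩
    have hByb : f y - f b ≤ B * (y - b) :=
      (div_le_iff₀ (by linarith)).mp (ht.slope_mono_adjacent hbt.1 hzt hby hyz)
    have hLB : L ≤ B := le_of_mul_le_mul_right ((hright y hyt).trans hByb) (by linarith)
    nlinarith [hleft x hxs, mul_le_mul_of_nonneg_right hLB (by linarith : 0 ≤ b - x)]

end Convexity

theorem ConvexOn.union_of_hasDerivWithinAt {s t : Set ℝ} {f : ℝ → ℝ} {b f₁ f₂ : ℝ}
    (hs : ConvexOn ℝ s f) (ht : ConvexOn ℝ t f) (hbs : IsGreatest s b) (hbt : IsLeast t b)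
    (h₁ : HasDerivWithinAt f f₁ (Iio b) b) (h₂ : HasDerivWithinAt f f₂ (Ioi b) b)
    (h₁₂ : f₁ ≤ f₂) : ConvexOn ℝ (s ∪ t) f := by
  refine hs.union_of_slope_le ht hbs hbt (L := f₁) (fun x hx => ?_) (fun z hz => ?_)
  · rcases (hbs.2 hx).eq_or_lt with rfl | hxb
    · simp
    have := hs.slope_le_of_hasDerivWithinAt_Iio hx hbs.1 hxb h₁
    rwa [slope_def_field, div_le_iff₀ (by linarith)] at this
  · rcases (hbt.2 hz).eq_or_lt with rfl | hbz
    · simp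
    have := ht.le_slope_of_hasDerivWithinAt_Ioi hbt.1 hz hbz h₂
    rw [slope_def_field, le_div_iff₀ (by linarith)] at this
    nlinarith

theorem hasDerivWithinAt_Iic_of_eqOn_Icc {f g : ℝ → ℝ} {g' a b : ℝ} (hab : a < b)
    (hfg : EqOn f g (Icc a b)) (hg : HasDerivAt g g' b) : HasDerivWithinAt f g' (Iic b) b :=
  hg.hasDerivWithinAt.congr_of_eventuallyEq
    (Filter.mem_of_superset (Icc_mem_nhdsLE hab) hfg) (hfg ⟨hab.le, le_rfl⟩)

theorem hasDerivWithinAt_Ici_of_eqOn_Icc {f g : ℝ → ℝ} {g' a b : ℝ} (hab : a < b)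
    (hfg : EqOn f g (Icc a b)) (hg : HasDerivAt g g' a) : HasDerivWithinAt f g' (Ici a) a :=
  hg.hasDerivWithinAt.congr_of_eventuallyEq
    (Filter.mem_of_superset (Icc_mem_nhdsGE hab) hfg) (hfg ⟨le_rfl, hab.le⟩)

theorem lt_of_derivWithin_Iic_lt_derivWithin_Ici {f : ℝ → ℝ} {a₀ a b αₗ βₗ α β : ℝ}
    (ha₀ : a₀ < a) (hab : a < b) (hleft : EqOn f (fun y => αₗ * y + βₗ) (Icc a₀ a))
    (hright : EqOn f (fun y => α * y + β) (Icc a b))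
    (hkink : derivWithin f (Iic a) a < derivWithin f (Ici a) a) : αₗ < α := by
  rwa [(hasDerivWithinAt_Iic_of_eqOn_Icc ha₀ hleft ((hasDerivAt_const_mul αₗ).add_const βₗ)
      ).derivWithin (uniqueDiffWithinAt_Iic a),
    (hasDerivWithinAt_Ici_of_eqOn_Icc hab hright ((hasDerivAt_const_mul α).add_const β)
      ).derivWithin (uniqueDiffWithinAt_Ici a)] at hkink

noncomputable def ramp (a b v : ℝ) : ℝ := max 0 (b - max a v)

section Ramp

variable {a b v : ℝ}

theorem ramp_nonneg : 0 ≤ ramp a b v := le_max_left _ _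

theorem ramp_of_le_left (hva : v ≤ a) (hab : a ≤ b) : ramp a b v = b - a := by
  simp [ramp, max_eq_left hva, hab]

theorem ramp_of_mem_Icc (hv : v ∈ Icc a b) : ramp a b v = b - v := by
  simp [ramp, max_eq_right hv.1, hv.2]

theorem ramp_of_right_le (hbv : b ≤ v) : ramp a b v = 0 := by
  simp [ramp, hbv]

theorem ramp_le (hab : a ≤ b) : ramp a b v ≤ b - a :=
  max_le (by linarith) (by linarith [le_max_left a v])

theorem continuous_ramp (a b : ℝ) : Continuous (ramp a b) := by
  unfold ramp; fun_prop

theorem Integrable.mul_ramp {f : ℝ → ℝ} {μ : Measure ℝ} (hf : Integrable f μ) (hab : a ≤ b) :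
    Integrable (fun y => f y * ramp a b y) μ :=
  hf.mul_bdd (continuous_ramp a b).aestronglyMeasurable (c := b - a)
    (Eventually.of_forall fun _ => by rw [Real.norm_of_nonneg ramp_nonneg]; exact ramp_le hab)

theorem integral_indicator_Ici_one (hab : a ≤ b) (v : ℝ) :
    ∫ u in a..b, (Ici v).indicator 1 u = ramp a b v := by
  rw [intervalIntegral.integral_of_le hab, integral_indicator_one measurableSet_Ici,
    measureReal_restrict_apply measurableSet_Ici]
  rcases le_or_gt v a with hva | hav
  · rw [inter_eq_right.2 (Ioc_subset_Ioi_self.trans (Ioi_subset_Ici hva)),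
      Real.volume_real_Ioc_of_le hab, ramp, max_eq_left hva, max_eq_right (by linarith)]
  · have : Ici v ∩ Ioc a b = Icc v b := by
      ext u
      simp only [mem_inter_iff, mem_Ici, mem_Ioc, mem_Icc]
      constructor
      · rintro ⟨hvu, -, hub⟩; exact ⟨hvu, hub⟩
      · rintro ⟨hvu, hub⟩; exact ⟨hvu, hav.trans_le hvu, hub⟩
    rw [this, Real.volume_real_Icc, ramp, max_eq_right hav.le, max_comm]

end Ramp

theorem integral_integral_Iic_eq_integral_mul_ramp {μ : Measure ℝ} [SFinite μ] {f : ℝ → ℝ}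
    (hf : Integrable f μ) {a b : ℝ} (hab : a ≤ b) :
    ∫ u in a..b, ∫ v in Iic u, f v ∂μ = ∫ v, f v * ramp a b v ∂μ := by
  set F : ℝ → ℝ → ℝ := fun u v => (Ici v).indicator 1 u * f v
  have hF : Integrable (Function.uncurry F) ((volume.restrict (Ioc a b)).prod μ) := by
    have : Function.uncurry F = {p : ℝ × ℝ | p.2 ≤ p.1}.indicator (fun p => f p.2) := by
      ext ⟨u, v⟩
      by_cases hvu : v ≤ u <;> simp [F, hvu]
    rw [this]
    exact (hf.comp_snd _).indicator (measurableSet_le measurable_snd measurable_fst)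
  calc ∫ u in a..b, ∫ v in Iic u, f v ∂μ
      = ∫ u in Ioc a b, ∫ v, F u v ∂μ := by
        rw [intervalIntegral.integral_of_le hab]
        congr 1 with u
        rw [← integral_indicator measurableSet_Iic]
        congr 1 with v
        by_cases hvu : v ≤ u <;> simp [F, hvu]
    _ = ∫ v, (∫ u in Ioc a b, F u v) ∂μ := integral_integral_swap hF
    _ = ∫ v, f v * ramp a b v ∂μ := by
        congr 1 with v
        rw [integral_mul_const, ← intervalIntegral.integral_of_le hab,
          integral_indicator_Ici_one hab, mul_comm]

theorem integral_integral_eq_setIntegral_mul_ramp {f : ℝ → ℝ} {c a b : ℝ}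
    (hf : IntegrableOn f (Ici c)) (hca : c ≤ a) (hab : a ≤ b) :
    ∫ u in a..b, ∫ v in c..u, f v = ∫ v in Ici c, f v * ramp a b v := by
  rw [← integral_integral_Iic_eq_integral_mul_ramp hf hab]
  refine intervalIntegral.integral_congr fun u hu => ?_
  rw [uIcc_of_le hab] at hu
  simp only [Measure.restrict_restrict measurableSet_Iic, Iic_inter_Ici,
    intervalIntegral.integral_of_le (hca.trans hu.1), integral_Icc_eq_integral_Ioc]

noncomputable def empiricalCDF {n : ℕ} (x : Fin n → ℝ) (u : ℝ) : ℝ :=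
  (n : ℝ)⁻¹ * (Finset.univ.filter fun i => x i ≤ u).card

theorem integral_empiricalCDF {n : ℕ} (x : Fin n → ℝ) {a b : ℝ} (hab : a ≤ b) :
    ∫ u in a..b, empiricalCDF x u = (n : ℝ)⁻¹ * ∑ i, ramp a b (x i) := by
  have hcard : ∀ u, ((Finset.univ.filter fun i => x i ≤ u).card : ℝ)
      = ∑ i, (Ici (x i)).indicator 1 u := fun u => by
    simp [indicator_apply, Finset.sum_boole]
  simp only [empiricalCDF, hcard, intervalIntegral.integral_const_mul]
  rw [intervalIntegral.integral_finsetSum fun i _ => ?_]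
  · simp only [integral_indicator_Ici_one hab]
  · have h1 : IntervalIntegrable (fun _ => (1 : ℝ)) volume a b := intervalIntegrable_const
    exact ⟨h1.1.indicator measurableSet_Ici, h1.2.indicator measurableSet_Ici⟩

theorem convexOn_Ici_mul_one_add_ramp {f : ℝ → ℝ} {a r α β ε : ℝ}
    (hf : ConvexOn ℝ (Ici a) f) (har : a < r) (haff : EqOn f (fun y => α * y + β) (Icc a r))
    (hα : α ≤ 0) (hfr : 0 ≤ f r) (hε : 0 ≤ ε) :
    ConvexOn ℝ (Ici a) (fun y => f y * (1 + ε * ramp a r y)) := by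
  have hr : f r = α * r + β := haff ⟨har.le, le_rfl⟩
  have hmid : ConvexOn ℝ (Icc a r) (fun y => f y * (1 + ε * ramp a r y)) := by
    refine ((convexOn_univ_quadratic (mul_nonneg hε (neg_nonneg.2 hα)) (α + ε * α * r - ε * β)
      (β * (1 + ε * r))).subset (subset_univ _) (convex_Icc a r)).congr fun y hy => ?_
    simp only [haff hy, ramp_of_mem_Icc hy]
    ring
  have hright : ConvexOn ℝ (Ici r) (fun y => f y * (1 + ε * ramp a r y)) :=
    (hf.subset (Ici_subset_Ici.2 har.le) (convex_Ici r)).congr fun y hy => by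
      simp [ramp_of_right_le (mem_Ici.1 hy)]
  rw [← Icc_union_Ici_eq_Ici har.le]
  refine hmid.union_of_slope_le hright (isGreatest_Icc har.le) isLeast_Ici (L := α - ε * f r)
    (fun x hx => ?_) (fun z hz => ?_)
  · simp only [ramp_of_right_le le_rfl, ramp_of_mem_Icc hx, haff hx, hr]
    nlinarith [mul_nonpos_of_nonpos_of_nonneg (mul_nonpos_of_nonneg_of_nonpos hε hα)
      (sq_nonneg (r - x))]
  · simp only [ramp_of_right_le le_rfl, ramp_of_right_le (mem_Ici.1 hz), mul_zero, add_zero,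
      mul_one]
    rcases (mem_Ici.1 hz).eq_or_lt with rfl | hrz
    · simp
    have hslope : α * (z - r) ≤ f z - f r := by
      have := hf.slope_mono_adjacent self_mem_Ici (har.le.trans hrz.le) har hrz
      rw [haff ⟨le_rfl, har.le⟩, hr, le_div_iff₀ (sub_pos.2 hrz),
        show (α * r + β - (α * a + β)) / (r - a) = α by field_simp [(sub_pos.2 har).ne']; ring]
        at this
      linarith
    nlinarith [mul_nonneg (mul_nonneg hε hfr) (sub_pos.2 hrz).le]

theorem eventually_convexOn_Ici_mul_one_add_ramp {f : ℝ → ℝ} {c a₀ a r αₗ βₗ α β : ℝ}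
    (hf : ConvexOn ℝ (Ici c) f) (hca : c ≤ a) (ha₀ : a₀ < a) (har : a < r)
    (hleft : EqOn f (fun y => αₗ * y + βₗ) (Icc a₀ a))
    (hright : EqOn f (fun y => α * y + β) (Icc a r)) (hkink : αₗ < α) (hα : α ≤ 0)
    (hfa : 0 ≤ f a) (hfr : 0 ≤ f r) :
    ∀ᶠ ε in 𝓝[>] 0, ConvexOn ℝ (Ici c) (fun y => f y * (1 + ε * ramp a r y)) := by
  have hε₀ : 0 < (α - αₗ) / (f a + 1) := div_pos (sub_pos.2 hkink) (by linarith)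
  filter_upwards [Ioo_mem_nhdsGT hε₀] with ε ⟨hε, hεε₀⟩
  rw [lt_div_iff₀ (by linarith)] at hεε₀
  set K := 1 + ε * (r - a)
  have hK : 1 ≤ K := by nlinarith
  have hKeq : ∀ y ≤ a, f y * (1 + ε * ramp a r y) = K * f y := fun y hy => by
    rw [ramp_of_le_left hy har.le, mul_comm]
  have hconv_left : ConvexOn ℝ (Icc c a) (fun y => f y * (1 + ε * ramp a r y)) :=
    ((hf.subset Icc_subset_Ici_self (convex_Icc c a)).smul (by linarith : (0 : ℝ) ≤ K)).congr
      fun y hy => (hKeq y hy.2).symm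
  have hconv_right := convexOn_Ici_mul_one_add_ramp (hf.subset (Ici_subset_Ici.2 hca)
    (convex_Ici a)) har hright hα hfr hε.le
  have hderiv_left : HasDerivWithinAt (fun y => f y * (1 + ε * ramp a r y)) (K * αₗ) (Iio a) a :=
    (hasDerivWithinAt_Iic_of_eqOn_Icc ha₀ (fun y hy => by rw [hKeq y hy.2, hleft hy])
      (((hasDerivAt_const_mul αₗ).add_const βₗ).const_mul K)).mono Iio_subset_Iic_self
  have hderiv_right : HasDerivWithinAt (fun y => f y * (1 + ε * ramp a r y))
      (α * K - ε * f a) (Ioi a) a := by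
    have hg : HasDerivAt (fun y => (α * y + β) * (1 + ε * (r - y))) (α * K - ε * f a) a := by
      refine (((hasDerivAt_const_mul α).add_const β).mul
        ((((hasDerivAt_id a).const_sub r).const_mul ε).const_add 1)).congr_deriv ?_
      rw [hright ⟨le_rfl, har.le⟩, id]
      ring
    exact (hasDerivWithinAt_Ici_of_eqOn_Icc har (fun y hy => by
      rw [hright hy, ramp_of_mem_Icc hy]) hg).mono Ioi_subset_Ici_self
  rw [← Icc_union_Ici_eq_Ici hca]
  refine hconv_left.union_of_hasDerivWithinAt hconv_right (isGreatest_Icc hca) isLeast_Ici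
    hderiv_left hderiv_right ?_
  nlinarith [mul_le_mul_of_nonneg_left hK (sub_pos.2 hkink).le]

theorem sub_sq_le_log_one_add {u : ℝ} (hu : 0 ≤ u) : u - u ^ 2 ≤ Real.log (1 + u) := by
  refine le_trans ?_ (Real.one_sub_inv_le_log_of_pos (by linarith : 0 < 1 + u))
  rw [le_sub_iff_add_le, ← le_sub_iff_add_le', inv_le_iff_one_le_mul₀' (by linarith)]
  nlinarith [pow_nonneg hu 3]

noncomputable def mleCriterion {n : ℕ} (x : Fin n → ℝ) (S : Set ℝ) (h : ℝ → ℝ) : ℝ :=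
  (n : ℝ)⁻¹ * ∑ i, Real.log (h (x i)) - ∫ y in S, h y

def MaximizesCriterion {n : ℕ} (P : (ℝ → ℝ) → Prop) (x : Fin n → ℝ) (S : Set ℝ)
    (f : ℝ → ℝ) : Prop :=
  ∀ h, P h → IntegrableOn h S → (∀ i, 0 < h (x i)) → mleCriterion x S h ≤ mleCriterion x S f

theorem MaximizesCriterion.inv_mul_sum_le_setIntegral_mul {n : ℕ} {P : (ℝ → ℝ) → Prop}
    {x : Fin n → ℝ} {S : Set ℝ} {f g : ℝ → ℝ} (hmax : MaximizesCriterion P x S f)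
    (hf : IntegrableOn f S) (hfg : IntegrableOn (fun y => f y * g y) S)
    (hfpos : ∀ i, 0 < f (x i)) (hg : ∀ i, 0 ≤ g (x i))
    (hP : ∀ᶠ ε in 𝓝[>] 0, P (fun y => f y * (1 + ε * g y))) :
    (n : ℝ)⁻¹ * ∑ i, g (x i) ≤ ∫ y in S, f y * g y := by
  set A := (n : ℝ)⁻¹ * ∑ i, g (x i) - ∫ y in S, f y * g y
  set M := (n : ℝ)⁻¹ * ∑ i, g (x i) ^ 2
  -- Using `log (1 + u) ≥ u - u ^ 2`, optimality against `f * (1 + ε g)` gives `ε A ≤ ε ^ 2 M`.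
  have hA : ∀ᶠ ε in 𝓝[>] 0, A ≤ ε * M := by
    filter_upwards [hP, self_mem_nhdsWithin] with ε hPε (hε : 0 < ε)
    have hεg : ∀ i, 0 ≤ ε * g (x i) := fun i => mul_nonneg hε.le (hg i)
    have hsplit : (fun y => f y * (1 + ε * g y)) = fun y => f y + ε * (f y * g y) := by
      ext y; ring
    have hint : IntegrableOn (fun y => f y * (1 + ε * g y)) S :=
      hsplit ▸ hf.add (hfg.const_mul ε)
    have hcrit := hmax _ hPε hint fun i => mul_pos (hfpos i) (by linarith [hεg i])
    have hexpand : mleCriterion x S (fun y => f y * (1 + ε * g y)) = mleCriterion x S f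
        + (n : ℝ)⁻¹ * ∑ i, Real.log (1 + ε * g (x i)) - ε * ∫ y in S, f y * g y := by
      have hlog : ∀ i, Real.log (f (x i) * (1 + ε * g (x i)))
          = Real.log (f (x i)) + Real.log (1 + ε * g (x i)) := fun i =>
        Real.log_mul (hfpos i).ne' (by linarith [hεg i])
      simp only [mleCriterion, hlog, Finset.sum_add_distrib, hsplit]
      rw [integral_add hf (hfg.const_mul ε), integral_const_mul]
      ring
    have hlog : ∑ i, (ε * g (x i) - (ε * g (x i)) ^ 2) ≤ ∑ i, Real.log (1 + ε * g (x i)) :=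
      Finset.sum_le_sum fun i _ => sub_sq_le_log_one_add (hεg i)
    have hsum : (n : ℝ)⁻¹ * ∑ i, (ε * g (x i) - (ε * g (x i)) ^ 2)
        = ε * ((n : ℝ)⁻¹ * ∑ i, g (x i)) - ε * (ε * M) := by
      simp only [M, Finset.sum_sub_distrib, ← Finset.mul_sum, mul_pow]
      ring
    have : ε * A ≤ ε * (ε * M) := by
      nlinarith [mul_le_mul_of_nonneg_left hlog (inv_nonneg.2 (Nat.cast_nonneg n : (0 : ℝ) ≤ n))]
    exact le_of_mul_le_mul_left this hε
  have hlim : Tendsto (fun ε => ε * M) (𝓝[>] 0) (𝓝 0) := by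
    simpa using ((continuous_mul_const M).tendsto 0).mono_left nhdsWithin_le_nhds
  linarith [ge_of_tendsto hlim hA]

theorem mle_forward_integral_inequality_general
    (n : ℕ) (x : Fin n → ℝ)
    (EDF : ℝ → ℝ)
    (hEDF : ∀ r : ℝ, EDF r = (n : ℝ)⁻¹ * (Finset.univ.filter fun i => x i ≤ r).card)
    (fhat : ℝ → ℝ)
    (hfconv : ConvexOn ℝ (Ici 0) fhat) (hfint : IntegrableOn fhat (Ici 0))
    (hfpos : ∀ i, 0 < fhat (x i))
    (hopt : ∀ h : ℝ → ℝ, ConvexOn ℝ (Ici 0) h → IntegrableOn h (Ici 0) →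
      (∀ i, 0 < h (x i)) →
      (n : ℝ)⁻¹ * ∑ i, Real.log (h (x i)) - ∫ y in Ici (0 : ℝ), h y ≤
        (n : ℝ)⁻¹ * ∑ i, Real.log (fhat (x i)) - ∫ y in Ici (0 : ℝ), fhat y)
    (m : ℕ) (t : ℕ → ℝ)
    (ht0 : t 0 = 0) (htlt : ∀ k, k < m → t k < t (k + 1))
    (haff : ∀ k, 1 ≤ k → k ≤ m → ∃ α β : ℝ,
      ∀ y ∈ Icc (t (k - 1)) (t k), fhat y = α * y + β)
    (htail : ∀ y, t m ≤ y → fhat y = 0)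
    (hkink : ∀ k, 1 ≤ k → k ≤ m →
      derivWithin fhat (Iic (t k)) (t k) < derivWithin fhat (Ici (t k)) (t k)) :
    ∀ k, k < m → ∀ r ∈ Ioc (t k) (t (k + 1)),
      ∫ u in (t k)..r, EDF u ≤ ∫ u in (t k)..r, (∫ v in (0 : ℝ)..u, fhat v) := by
  intro k hk r ⟨htkr, hrt⟩
  have htk : 0 ≤ t k := ht0 ▸ (strictMonoOn_Iic_of_lt_succ htlt).monotoneOn
    (mem_Iic.2 (Nat.zero_le m)) (mem_Iic.2 hk.le) (Nat.zero_le k)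
  have hanti : AntitoneOn fhat (Ici 0) := hfconv.antitoneOn_of_eqOn_Ici htail
  have hf_nonneg : ∀ y, 0 ≤ y → 0 ≤ fhat y := fun y hy =>
    htail _ (le_max_right y (t m)) ▸ hanti hy (hy.trans (le_max_left _ _)) (le_max_left _ _)
  obtain ⟨α, β, hαβ⟩ := haff (k + 1) (by omega) hk
  simp only [Nat.add_sub_cancel] at hαβ
  have hright : EqOn fhat (fun y => α * y + β) (Icc (t k) r) := fun y hy =>
    hαβ y ⟨hy.1, hy.2.trans hrt⟩
  have hα : α ≤ 0 := by
    have := hanti htk (htk.trans htkr.le) htkr.le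
    rw [hright ⟨le_rfl, htkr.le⟩, hright ⟨htkr.le, le_rfl⟩] at this
    nlinarith
  have hconv : ∀ᶠ ε in 𝓝[>] 0,
      ConvexOn ℝ (Ici 0) (fun y => fhat y * (1 + ε * ramp (t k) r y)) := by
    cases k with
    | zero =>
      filter_upwards [self_mem_nhdsWithin] with ε (hε : 0 < ε)
      rw [ht0] at htkr hright ⊢
      exact convexOn_Ici_mul_one_add_ramp hfconv htkr hright hα (hf_nonneg r htkr.le) hε.le
    | succ j =>
      obtain ⟨αₗ, βₗ, hleft⟩ := haff (j + 1) (by omega) hk.le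
      simp only [Nat.add_sub_cancel] at hleft
      have htj := htlt j (by omega)
      exact eventually_convexOn_Ici_mul_one_add_ramp hfconv htk htj htkr hleft hright
        (lt_of_derivWithin_Iic_lt_derivWithin_Ici htj htkr hleft hright (hkink _ (by omega) hk.le))
        hα (hf_nonneg _ htk) (hf_nonneg r (htk.trans htkr.le))
  have hmax : MaximizesCriterion (ConvexOn ℝ (Ici 0)) x (Ici 0) fhat := hopt
  calc ∫ u in (t k)..r, EDF u
      = (n : ℝ)⁻¹ * ∑ i, ramp (t k) r (x i) := by
        rw [show EDF = empiricalCDF x from funext hEDF, integral_empiricalCDF x htkr.le]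
    _ ≤ ∫ y in Ici 0, fhat y * ramp (t k) r y :=
        hmax.inv_mul_sum_le_setIntegral_mul hfint (Integrable.mul_ramp hfint htkr.le) hfpos
          (fun _ => ramp_nonneg) hconv
    _ = ∫ u in (t k)..r, (∫ v in (0 : ℝ)..u, fhat v) :=
        (integral_integral_eq_setIntegral_mul_ramp hfint htk htkr.le).symm

/-- Forward integral inequality for the maximum likelihood estimator:
`∫_{t_k}^r 𝔽 ≤ ∫_{t_k}^r F̂` for all `r ∈ (t_k, t_{k+1}]`, where `F̂(u) = ∫_0^u f̂`. -/
theorem mle_forward_integral_inequality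
    (n : ℕ) (hn : 1 ≤ n) (x : Fin n → ℝ) (hx : ∀ i, 0 < x i)
    (EDF : ℝ → ℝ)
    (hEDF : ∀ r : ℝ, EDF r = (n : ℝ)⁻¹ * (Finset.univ.filter fun i => x i ≤ r).card)
    (fhat : ℝ → ℝ)
    (hfconv : ConvexOn ℝ (Ici 0) fhat) (hfint : IntegrableOn fhat (Ici 0))
    (hfpos : ∀ i, 0 < fhat (x i))
    (hopt : ∀ h : ℝ → ℝ, ConvexOn ℝ (Ici 0) h → IntegrableOn h (Ici 0) →
      (∀ i, 0 < h (x i)) →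
      (n : ℝ)⁻¹ * ∑ i, Real.log (h (x i)) - ∫ y in Ici (0 : ℝ), h y ≤
        (n : ℝ)⁻¹ * ∑ i, Real.log (fhat (x i)) - ∫ y in Ici (0 : ℝ), fhat y)
    (m : ℕ) (t : ℕ → ℝ)
    (ht0 : t 0 = 0) (htlt : ∀ k, k < m → t k < t (k + 1))
    (htmax : ∀ i, x i < t m)
    (haff : ∀ k, 1 ≤ k → k ≤ m → ∃ α β : ℝ,
      ∀ y ∈ Icc (t (k - 1)) (t k), fhat y = α * y + β)
    (htail : ∀ y, t m ≤ y → fhat y = 0)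
    (hkink : ∀ k, 1 ≤ k → k ≤ m →
      derivWithin fhat (Iic (t k)) (t k) < derivWithin fhat (Ici (t k)) (t k)) :
    ∀ k, k < m → ∀ r ∈ Ioc (t k) (t (k + 1)),
      ∫ u in (t k)..r, EDF u ≤ ∫ u in (t k)..r, (∫ v in (0 : ℝ)..u, fhat v) :=
  mle_forward_integral_inequality_general n x EDF hEDF fhat hfconv hfint hfpos hopt m t ht0 htlt
    haff htail hkink
end

section
/- Let F : [0,∞) → ℝ be a concave function and let 𝔽 : [0,∞) → ℝ be a bounded function with sup_{x ∈ [0,∞)} |𝔽(x) − F(x)| < ∞. Let F̂ : [0,∞) → ℝ be the least concave majorant of 𝔽, i.e. the pointwise infimum of all concave functions on [0,∞) that dominate 𝔽 pointwise. Then sup_{x ∈ [0,∞)} |F̂(x) − F(x)| ≤ sup_{x ∈ [0,∞)} |𝔽(x) − F(x)|. -/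
open MeasureTheory Set

/-- Marshall's lemma: if `F̂` is the least concave majorant of `𝔽` on `[0,∞)` and `F` is
concave, then `sup |F̂ - F| ≤ sup |𝔽 - F|` on `[0,∞)`. -/
theorem marshall_lemma
    (F EDF Fhat : ℝ → ℝ)
    (hF : ConcaveOn ℝ (Ici 0) F)
    (hbdd : ∃ C : ℝ, ∀ x ∈ Ici (0 : ℝ), |EDF x| ≤ C)
    (hdist : ∃ C : ℝ, ∀ x ∈ Ici (0 : ℝ), |EDF x - F x| ≤ C)
    (hFhat : ∀ x ∈ Ici (0 : ℝ), Fhat x =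
      sInf {y : ℝ | ∃ g : ℝ → ℝ, ConcaveOn ℝ (Ici 0) g ∧
        (∀ z ∈ Ici (0 : ℝ), EDF z ≤ g z) ∧ g x = y}) :
    sSup ((fun x => |Fhat x - F x|) '' Ici 0) ≤
      sSup ((fun x => |EDF x - F x|) '' Ici 0) := by
  obtain ⟨C, hC⟩ := hdist
  set M := sSup ((fun x => |EDF x - F x|) '' Ici 0) with hMdef
  have himg : ∀ z ∈ Ici (0 : ℝ), |EDF z - F z| ≤ M := by
    intro z hz
    exact le_csSup ⟨C, by rintro _ ⟨w, hw, rfl⟩; exact hC w hw⟩ ⟨z, hz, rfl⟩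
  have hM0 : (0 : ℝ) ≤ M := le_trans (abs_nonneg _) (himg 0 (mem_Ici.mpr le_rfl))
  apply Real.sSup_le _ hM0
  rintro _ ⟨x, hx, rfl⟩
  have hS := hFhat x hx
  have hconc : ConcaveOn ℝ (Ici 0) (fun z => F z + M) :=
    hF.add (concaveOn_const _ (convex_Ici 0))
  have hdom : ∀ z ∈ Ici (0 : ℝ), EDF z ≤ F z + M := by
    intro z hz
    have h1 := himg z hz
    have h2 := le_abs_self (EDF z - F z)
    linarith
  have hmem : F x + M ∈ {y : ℝ | ∃ g : ℝ → ℝ, ConcaveOn ℝ (Ici 0) g ∧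
      (∀ z ∈ Ici (0 : ℝ), EDF z ≤ g z) ∧ g x = y} :=
    ⟨fun z => F z + M, hconc, hdom, rfl⟩
  have hbb : BddBelow {y : ℝ | ∃ g : ℝ → ℝ, ConcaveOn ℝ (Ici 0) g ∧
      (∀ z ∈ Ici (0 : ℝ), EDF z ≤ g z) ∧ g x = y} := by
    refine ⟨EDF x, ?_⟩
    rintro _ ⟨g, hg, hgd, rfl⟩
    exact hgd x hx
  have h1 : Fhat x ≤ F x + M := by rw [hS]; exact csInf_le hbb hmem
  have h2 : EDF x ≤ Fhat x := by
    rw [hS]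
    refine le_csInf ⟨_, hmem⟩ ?_
    rintro _ ⟨g, hg, hgd, rfl⟩
    exact hgd x hx
  have h3 := himg x hx
  rw [abs_le] at h3 ⊢
  constructor <;> linarith [h3.1, h3.2]
end
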